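/- Let (C, D, M) be an ST-triple inside a triangulated category T. Then the heart T_M^0 of the t-structure (T_M^{≤0}, T_M^{≥0}) is covariantly finite in T, i.e., every object of T admits a left T_M^0-approximation. -/

import Mathlib

open CategoryTheory Limits Pretriangulated

namespace STPaper

variable {T : Type*} [Category T] [Preadditive T] [HasZeroObject T]
  [HasShift T ℤ] [∀ n : ℤ, (CategoryTheory.shiftFunctor T n).Additive] [Pretriangulated T]

/-- The shift of a class of objects. -/
def shSet (S : Set T) (n : ℤ) : Set T := (CategoryTheory.shiftFunctor T n).obj '' S

/-- The class `Y₁ ∗ Y₂`: objects `Z` fitting in a distinguished triangle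
`Y₁ → Z → Y₂ → ΣY₁` with `Y₁ ∈ 𝒴₁` and `Y₂ ∈ 𝒴₂`. -/
def star (Y₁ Y₂ : Set T) : Set T :=
  {Z | ∃ (A B : T) (f : A ⟶ Z) (g : Z ⟶ B) (h : B ⟶ A⟦(1:ℤ)⟧),
    (Triangle.mk f g h ∈ distTriang T) ∧ A ∈ Y₁ ∧ B ∈ Y₂}

/-- The extension closure of a class of objects. -/
inductive filt (S : Set T) : T → Prop
  | of {X : T} (h : X ∈ S) : filt S X
  | zero {X : T} (h : IsZero X) : filt S X
  | ext {A Z B : T} (f : A ⟶ Z) (g : Z ⟶ B) (h : B ⟶ A⟦(1:ℤ)⟧)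
      (hT : Triangle.mk f g h ∈ distTriang T) (hA : filt S A) (hB : filt S B) : filt S Z

/-- The thick subcategory generated by a class of objects. -/
inductive thick (S : Set T) : T → Prop
  | of {X : T} (h : X ∈ S) : thick S X
  | zero {X : T} (h : IsZero X) : thick S X
  | shift {X : T} (hX : thick S X) (n : ℤ) : thick S (X⟦n⟧)
  | ext {A Z B : T} (f : A ⟶ Z) (g : Z ⟶ B) (h : B ⟶ A⟦(1:ℤ)⟧)
      (hT : Triangle.mk f g h ∈ distTriang T) (hA : thick S A) (hB : thick S B) : thick S Z
  | smd {X Y : T} (i : X ⟶ Y) (r : Y ⟶ X) (hir : i ≫ r = 𝟙 X) (hY : thick S Y) : thick S X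

/-- Two classes of objects coincide up to isomorphism. -/
def isoEq (S L : Set T) : Prop :=
  (∀ X ∈ S, ∃ Y ∈ L, Nonempty (X ≅ Y)) ∧ (∀ Y ∈ L, ∃ X ∈ S, Nonempty (X ≅ Y))

/-- A simple-minded collection. -/
structure IsSMC (S : Set T) : Prop where
  negVanish : ∀ X ∈ S, ∀ Y ∈ S, ∀ n : ℤ, n < 0 → ∀ f : X ⟶ Y⟦n⟧, f = 0
  nonzero : ∀ X ∈ S, ¬ IsZero X
  endo : ∀ X ∈ S, ∀ f : X ⟶ X, f = 0 ∨ IsIso f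
  noHom : ∀ X ∈ S, ∀ Y ∈ S, X ≠ Y → ∀ f : X ⟶ Y, f = 0
  generates : ∀ X : T, thick S X

/-- `T^{𝒮,≤0}` for a collection `S`. -/
def leS (S : Set T) : Set T :=
  {X | ∀ n : ℤ, 0 < n → ∀ Y ∈ S, ∀ f : X⟦n⟧ ⟶ Y, f = 0}

/-- `Σ^{0}Filt(S) ∗ Σ^{-1}Filt(S) ∗ ⋯ ∗ Σ^{-l}Filt(S)`. -/
def geChainS (S : Set T) : ℕ → Set T
  | 0 => {X | filt S X}
  | (l+1) => star (geChainS S l) (shSet {X | filt S X} (-(l+1 : ℤ)))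

/-- `T^{𝒮,≥0}`. -/
def geS (S : Set T) : Set T := ⋃ l, geChainS S l

/-- `Σ^{l}Filt(S) ∗ Σ^{l-1}Filt(S) ∗ ⋯ ∗ Filt(S)`. -/
def leChainS (S : Set T) : ℕ → Set T
  | 0 => {X | filt S X}
  | (l+1) => star (shSet {X | filt S X} (l+1 : ℤ)) (leChainS S l)

/-- A `t`-structure `(Le, Ge) = (T^{≤0}, T^{≥0})` on `T`. -/
structure IsTStr (Le Ge : Set T) : Prop where
  le_shift : ∀ X ∈ Le, X⟦(1:ℤ)⟧ ∈ Le
  ge_shift : ∀ X ∈ Ge, X⟦(-1:ℤ)⟧ ∈ Ge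
  hom_zero : ∀ X ∈ Le, ∀ Y ∈ Ge, ∀ f : X ⟶ Y⟦(-1:ℤ)⟧, f = 0
  exhaust : ∀ Z : T, Z ∈ star Le (shSet Ge (-1))

/-- The heart of a pair of classes. -/
def heart (Le Ge : Set T) : Set T := Le ∩ Ge

/-- A bounded `t`-structure. -/
structure IsBoundedTStr (Le Ge : Set T) : Prop where
  toIsTStr : IsTStr Le Ge
  bddRight : ∀ X : T, ∃ n : ℤ, X⟦n⟧ ∈ Le
  bddLeft : ∀ X : T, ∃ n : ℤ, X⟦n⟧ ∈ Ge

/-- A simple object of the heart `H`: a nonzero object such that in any distinguished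
triangle `A → X → B → ΣA` with `A, B ∈ H`, one of `A`, `B` vanishes. -/
def heartSimple (H : Set T) (X : T) : Prop :=
  X ∈ H ∧ ¬ IsZero X ∧ ∀ (A B : T) (f : A ⟶ X) (g : X ⟶ B) (h : B ⟶ A⟦(1:ℤ)⟧),
    (Triangle.mk f g h ∈ distTriang T) → A ∈ H → B ∈ H → IsZero A ∨ IsZero B

/-- An algebraic `t`-structure: a bounded `t`-structure whose heart is a length category,
i.e. every object of the heart is a finite iterated extension of simple objects of the heart. -/
def IsAlgTStr (Le Ge : Set T) : Prop :=
  IsBoundedTStr Le Ge ∧ ∀ X ∈ heart Le Ge, filt {Y | heartSimple (heart Le Ge) Y} X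


section Silting

variable (T) in
/-- A Krull–Schmidt category: every object is a finite biproduct of objects with local
endomorphism rings. -/
def IsKrullSchmidt [HasFiniteBiproducts T] : Prop :=
  ∀ X : T, ∃ (n : ℕ) (f : Fin n → T),
    (∀ i, IsLocalRing (End (f i))) ∧ Nonempty (X ≅ ⨁ f)

/-- `X` belongs to `add M`: it is a direct summand of a finite direct sum of copies of `M`. -/
def addObj [HasFiniteBiproducts T] (M : T) (X : T) : Prop :=
  ∃ (n : ℕ) (i : X ⟶ ⨁ (fun _ : Fin n => M)) (r : (⨁ (fun _ : Fin n => M)) ⟶ X),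
    i ≫ r = 𝟙 X

/-- The subcategory `add M`. -/
def addSet [HasFiniteBiproducts T] (M : T) : Set T := {X | addObj M X}

/-- A silting object of `T`. -/
def IsSiltingObj (M : T) : Prop :=
  (∀ n : ℤ, 0 < n → ∀ f : M ⟶ M⟦n⟧, f = 0) ∧ ∀ X : T, thick {M} X

/-- A basic object: it has no repeated (nonzero) direct summand. -/
def IsBasic [HasBinaryBiproducts T] (M : T) : Prop :=
  ¬ ∃ (X Y : T), ¬ IsZero X ∧ Nonempty (M ≅ (X ⊞ X) ⊞ Y)

/-- A silting subcategory of `T`. -/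
structure IsSiltingSubcat [HasBinaryBiproducts T] (M : Set T) : Prop where
  isoClosed : ∀ {X Y : T}, (X ≅ Y) → X ∈ M → Y ∈ M
  zeroMem : ∀ X : T, IsZero X → X ∈ M
  sumMem : ∀ X ∈ M, ∀ Y ∈ M, (X ⊞ Y) ∈ M
  smdMem : ∀ (X Y : T) (i : X ⟶ Y) (r : Y ⟶ X), i ≫ r = 𝟙 X → Y ∈ M → X ∈ M
  presilting : ∀ X ∈ M, ∀ Y ∈ M, ∀ n : ℤ, 0 < n → ∀ f : X ⟶ Y⟦n⟧, f = 0
  generates : ∀ X : T, thick M X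

/-- `T_{ℳ,≤0} = {X | Hom(ℳ, Σ^{>0} X) = 0}`. -/
def leM (M : Set T) : Set T :=
  {X | ∀ n : ℤ, 0 < n → ∀ Y ∈ M, ∀ f : Y ⟶ X⟦n⟧, f = 0}

/-- `Σ^l ℳ ∗ Σ^{l-1} ℳ ∗ ⋯ ∗ ℳ`. -/
def geChainM (M : Set T) : ℕ → Set T
  | 0 => M
  | (l+1) => star (shSet M (l+1 : ℤ)) (geChainM M l)

/-- `T_{ℳ,≥0} = ⋃_{l ≥ 0} Σ^l ℳ ∗ ⋯ ∗ ℳ`. -/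
def geM (M : Set T) : Set T := ⋃ l, geChainM M l

/-- `ℳ ∗ Σℳ ∗ ⋯ ∗ Σ^l ℳ`. -/
def leChainM (M : Set T) : ℕ → Set T
  | 0 => M
  | (l+1) => star (leChainM M l) (shSet M (l+1 : ℤ))

/-- A co-`t`-structure `(Ge, Le) = (T_{≥0}, T_{≤0})` on `T`. -/
structure IsCotStr [HasBinaryBiproducts T] (Ge Le : Set T) : Prop where
  isoGe : ∀ {X Y : T}, (X ≅ Y) → X ∈ Ge → Y ∈ Ge
  zeroGe : ∀ X : T, IsZero X → X ∈ Ge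
  sumGe : ∀ X ∈ Ge, ∀ Y ∈ Ge, (X ⊞ Y) ∈ Ge
  smdGe : ∀ (X Y : T) (i : X ⟶ Y) (r : Y ⟶ X), i ≫ r = 𝟙 X → Y ∈ Ge → X ∈ Ge
  isoLe : ∀ {X Y : T}, (X ≅ Y) → X ∈ Le → Y ∈ Le
  zeroLe : ∀ X : T, IsZero X → X ∈ Le
  sumLe : ∀ X ∈ Le, ∀ Y ∈ Le, (X ⊞ Y) ∈ Le
  smdLe : ∀ (X Y : T) (i : X ⟶ Y) (r : Y ⟶ X), i ≫ r = 𝟙 X → Y ∈ Le → X ∈ Le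
  ge_shift : ∀ X ∈ Ge, X⟦(-1:ℤ)⟧ ∈ Ge
  le_shift : ∀ X ∈ Le, X⟦(1:ℤ)⟧ ∈ Le
  hom_zero : ∀ X ∈ Ge, ∀ Y ∈ Le, ∀ f : X⟦(-1:ℤ)⟧ ⟶ Y, f = 0
  exhaust : ∀ Z : T, Z ∈ star (shSet Ge (-1)) Le

/-- A bounded co-`t`-structure. -/
structure IsBoundedCot [HasBinaryBiproducts T] (Ge Le : Set T) : Prop where
  toCot : IsCotStr Ge Le
  bddGe : ∀ X : T, ∃ n : ℤ, X⟦n⟧ ∈ Ge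
  bddLe : ∀ X : T, ∃ n : ℤ, X⟦n⟧ ∈ Le

end Silting

section K0

variable (T) in
/-- Relations defining the Grothendieck group of the triangulated category `T`. -/
def triRel : Set (FreeAbelianGroup T) :=
  {x | ∃ Tr : Triangle T, (Tr ∈ distTriang T) ∧
    x = FreeAbelianGroup.of Tr.obj₂ - FreeAbelianGroup.of Tr.obj₁ - FreeAbelianGroup.of Tr.obj₃}

variable (T) in
/-- The Grothendieck group `K₀(T)` of the triangulated category `T`. -/
abbrev K0 : Type _ := FreeAbelianGroup T ⧸ AddSubgroup.closure (triRel T)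

/-- The class of an object of `T` in `K₀(T)`. -/
def K0mk (X : T) : K0 T := QuotientAddGroup.mk (FreeAbelianGroup.of X)

/-- An indecomposable object: nonzero, and it admits no nontrivial idempotent endomorphism. -/
def Indec (X : T) : Prop :=
  ¬ IsZero X ∧ ∀ e : X ⟶ X, e ≫ e = e → e = 0 ∨ e = 𝟙 X

/-- `ι` is a complete set of representatives of the isomorphism classes of indecomposable
objects of `ℳ`. -/
def IndReps (M : Set T) (ι : Set T) : Prop :=
  (∀ X ∈ ι, X ∈ M ∧ Indec X) ∧
  (∀ Y, Y ∈ M → Indec Y → ∃ X ∈ ι, Nonempty (X ≅ Y)) ∧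
  (∀ X ∈ ι, ∀ Y ∈ ι, X ≠ Y → IsEmpty (X ≅ Y))

/-- Relations defining the Grothendieck group of the heart `H`, coming from distinguished
triangles of `T` all of whose vertices lie in `H` (i.e. short exact sequences in `H`). -/
def heartRel (H : Set T) : Set (FreeAbelianGroup ↥H) :=
  {x | ∃ (A Z B : ↥H) (f : (A : T) ⟶ (Z : T)) (g : (Z : T) ⟶ (B : T))
    (h : (B : T) ⟶ (A : T)⟦(1:ℤ)⟧), (Triangle.mk f g h ∈ distTriang T) ∧
      x = FreeAbelianGroup.of Z - FreeAbelianGroup.of A - FreeAbelianGroup.of B}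

/-- The Grothendieck group `K₀(H)` of a heart `H ⊆ T`. -/
abbrev K0Heart (H : Set T) : Type _ := FreeAbelianGroup ↥H ⧸ AddSubgroup.closure (heartRel H)

/-- The class of an object of `H` in `K₀(H)`. -/
def K0Hmk {H : Set T} (X : ↥H) : K0Heart H := QuotientAddGroup.mk (FreeAbelianGroup.of X)

end K0

section STTriple

variable (R : Type*) [CommRing R] [IsArtinianRing R] [CategoryTheory.Linear R T]

/-- The aisle `T_M^{≤ n} = {X | Hom(M, Σ^{> n} X) = 0}`. -/
def tleMn (M : T) (n : ℤ) : Set T :=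
  {X | ∀ k : ℤ, n < k → ∀ f : M ⟶ X⟦k⟧, f = 0}

/-- The co-aisle `T_M^{≥ n} = {X | Hom(M, Σ^{< n} X) = 0}`. -/
def tgeMn (M : T) (n : ℤ) : Set T :=
  {X | ∀ k : ℤ, k < n → ∀ f : M ⟶ X⟦k⟧, f = 0}

/-- The heart `T_M^0` of the `t`-structure associated with a silting object `M`. -/
def heartM (M : T) : Set T := tleMn M 0 ∩ tgeMn M 0

/-- An ST-triple `(C, D, M)` inside `T` (over the commutative artinian base ring `R`). -/
structure IsSTTriple (C D : Set T) (M : T) : Prop where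
  thickC : ∀ X : T, thick C X → X ∈ C
  thickD : ∀ X : T, thick D X → X ∈ D
  memC : M ∈ C
  presilting : ∀ n : ℤ, 0 < n → ∀ f : M ⟶ M⟦n⟧, f = 0
  generates : ∀ X : T, X ∈ C ↔ thick {M} X
  finLength : ∀ X : T, IsFiniteLength R (M ⟶ X)
  tstr : IsTStr (tleMn M 0) (tgeMn M 0)
  exhaustT : ∀ X : T, ∃ n : ℤ, X ∈ tleMn M n
  eqD : ∀ X : T, X ∈ D ↔ ∃ n : ℤ, X ∈ tgeMn M n

variable {R}

/-- `S` is a direct sum of a complete set of representatives of the simple objects of the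
heart `H`. -/
def IsSumOfSimples [HasFiniteBiproducts T] (H : Set T) (S : T) : Prop :=
  ∃ (n : ℕ) (f : Fin n → T),
    (∀ i, heartSimple H (f i)) ∧
    (∀ Y : T, heartSimple H Y → ∃ i, Nonempty (f i ≅ Y)) ∧
    (∀ i j, i ≠ j → IsEmpty (f i ≅ f j)) ∧ Nonempty (S ≅ ⨁ f)

/-- `S` is a complete set of representatives of the isomorphism classes of simple objects
of the heart of the `t`-structure associated with `M`. -/
def heartSimplesReps (M : T) (S : Set T) : Prop :=
  (∀ X ∈ S, heartSimple (heartM M) X) ∧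
  (∀ Y : T, heartSimple (heartM M) Y → ∃ X ∈ S, Nonempty (X ≅ Y)) ∧
  (∀ X ∈ S, ∀ Y ∈ S, X ≠ Y → IsEmpty (X ≅ Y))

/-- A simple-minded collection of the (thick) subcategory `D ⊆ T`. -/
structure IsSMCof (D : Set T) (S : Set T) : Prop where
  subset : S ⊆ D
  negVanish : ∀ X ∈ S, ∀ Y ∈ S, ∀ n : ℤ, n < 0 → ∀ f : X ⟶ Y⟦n⟧, f = 0
  nonzero : ∀ X ∈ S, ¬ IsZero X
  endo : ∀ X ∈ S, ∀ f : X ⟶ X, f = 0 ∨ IsIso f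
  noHom : ∀ X ∈ S, ∀ Y ∈ S, X ≠ Y → ∀ f : X ⟶ Y, f = 0
  generates : ∀ X : T, X ∈ D ↔ thick S X

/-- A silting object of the (thick) subcategory `C ⊆ T`. -/
def IsSiltingOfC (C : Set T) (M : T) : Prop :=
  M ∈ C ∧ (∀ n : ℤ, 0 < n → ∀ f : M ⟶ M⟦n⟧, f = 0) ∧ ∀ X : T, X ∈ C ↔ thick {M} X

end STTriple

/-! The aisle `T_M^{≤0}` is covariantly finite. An object `X` of `T_M^{≤n+1}` is pushed into
`T_M^{≤n}` by killing the finitely generated module `Hom(M, X⟦n+1⟧)` one generator at a time: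
a generator, read as a map `u : M⟦-(n+1)⟧ ⟶ X`, is killed by passing to the cone of `u`, and every
map from `X` into `T_M^{≤n}` factors through that cone because `Hom(M⟦-(n+1)⟧, T_M^{≤n}) = 0`.
On `T_M^{≤0}` the truncation `X ⟶ τ^{≥0}X` lands in the heart, and it is a left approximation
because `Hom(T_M^{≤-1}, T_M^{≥0}) = 0`. -/

section Approximation

variable {C : Type*} [Category C]

-- A left `S`-approximation of `X` is such an `f` with `Y ∈ S`.
def IsLeftApprox (S : Set C) {X Y : C} (f : X ⟶ Y) : Prop :=
  ∀ Z ∈ S, ∀ g : X ⟶ Z, ∃ h : Y ⟶ Z, f ≫ h = g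

namespace IsLeftApprox

variable {S : Set C}

lemma of_isIso {X Y : C} (f : X ⟶ Y) [IsIso f] : IsLeftApprox S f :=
  fun _ _ g => ⟨inv f ≫ g, by simp⟩

lemma comp {X Y Z : C} {f : X ⟶ Y} {f' : Y ⟶ Z} (hf : IsLeftApprox S f)
    (hf' : IsLeftApprox S f') : IsLeftApprox S (f ≫ f') := by
  intro W hW g
  obtain ⟨h, rfl⟩ := hf W hW g
  obtain ⟨h', rfl⟩ := hf' W hW h
  exact ⟨h', Category.assoc _ _ _⟩

lemma mono {S' : Set C} (hS : S ⊆ S') {X Y : C} {f : X ⟶ Y} (hf : IsLeftApprox S' f) :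
    IsLeftApprox S f :=
  fun Z hZ => hf Z (hS hZ)

lemma mor₂ {S : Set T} (Tr : Triangle T) (hTr : Tr ∈ distTriang T)
    (h : ∀ Z ∈ S, ∀ g : Tr.obj₂ ⟶ Z, Tr.mor₁ ≫ g = 0) : IsLeftApprox S Tr.mor₂ := by
  intro Z hZ g
  obtain ⟨h', hh'⟩ := Triangle.yoneda_exact₂ Tr hTr g (h Z hZ g)
  exact ⟨h', hh'.symm⟩

end IsLeftApprox

end Approximation

section Shift

variable {C : Type*} [Category C] [Preadditive C] [HasShift C ℤ]

noncomputable def shiftHomEquiv [∀ n : ℤ, (shiftFunctor C n).Additive] (X Y : C) {a b : ℤ}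
    (h : a + b = 0) : (X⟦a⟧ ⟶ Y) ≃+ (X ⟶ Y⟦b⟧) :=
  haveI : (shiftEquiv' C a b h).functor.Additive := inferInstanceAs (shiftFunctor C a).Additive
  (shiftEquiv' C a b h).toAdjunction.homAddEquiv X Y

lemma shiftHomEquiv_comp [∀ n : ℤ, (shiftFunctor C n).Additive] (X : C) {Y Y' : C} {a b : ℤ}
    (h : a + b = 0) (u : X⟦a⟧ ⟶ Y) (v : Y ⟶ Y') :
    shiftHomEquiv X Y' h (u ≫ v) = shiftHomEquiv X Y h u ≫ v⟦b⟧' :=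
  (shiftEquiv' C a b h).toAdjunction.homEquiv_naturality_right u v

variable {M : C}

lemma tleMn_mono {m n : ℤ} (h : m ≤ n) : tleMn M m ⊆ tleMn M n :=
  fun _ hX k hk => hX k (by omega)

lemma shift_mem_tleMn {X : C} {m : ℤ} (hX : X ∈ tleMn M m) {j n : ℤ} (h : m ≤ n + j) :
    X⟦j⟧ ∈ tleMn M n := by
  intro k hk f
  let e := (shiftFunctorAdd' C j k (j + k) rfl).app X
  simpa using congrArg (· ≫ e.hom) (hX (j + k) (by omega) (f ≫ e.inv))

lemma shift_mem_tgeMn {X : C} {m : ℤ} (hX : X ∈ tgeMn M m) {j n : ℤ} (h : n + j ≤ m) :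
    X⟦j⟧ ∈ tgeMn M n := by
  intro k hk f
  let e := (shiftFunctorAdd' C j k (j + k) rfl).app X
  simpa using congrArg (· ≫ e.hom) (hX (j + k) (by omega) (f ≫ e.inv))

end Shift

section Triangles

variable {M : T}

-- Through the adjunction `⟦-k⟧ ⊣ ⟦k⟧` this is the exactness of `Hom(M⟦-k⟧, -)` on `Tr`.
lemma exists_eq_comp_shift_map_mor₂ (Tr : Triangle T) (hTr : Tr ∈ distTriang T) {k : ℤ}
    (hvanish : ∀ g : M ⟶ Tr.obj₁⟦(1 : ℤ)⟧⟦k⟧, g = 0) (f : M ⟶ Tr.obj₃⟦k⟧) :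
    ∃ f' : M ⟶ Tr.obj₂⟦k⟧, f = f' ≫ Tr.mor₂⟦k⟧' := by
  let e : ∀ Y : T, (M⟦-k⟧ ⟶ Y) ≃+ (M ⟶ Y⟦k⟧) := fun Y => shiftHomEquiv M Y (neg_add_cancel k)
  obtain ⟨g, hg⟩ := Triangle.coyoneda_exact₃ Tr hTr ((e _).symm f) <| (e _).injective <| by
    rw [map_zero, shiftHomEquiv_comp, AddEquiv.apply_symm_apply]
    exact hvanish _
  refine ⟨e _ g, ?_⟩
  rw [← shiftHomEquiv_comp, ← hg, AddEquiv.apply_symm_apply]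

lemma mem_tleMn_obj₃ (Tr : Triangle T) (hTr : Tr ∈ distTriang T) {n : ℤ}
    (h₁ : Tr.obj₁⟦(1 : ℤ)⟧ ∈ tleMn M n) (h₂ : Tr.obj₂ ∈ tleMn M n) : Tr.obj₃ ∈ tleMn M n := by
  intro k hk f
  obtain ⟨f', rfl⟩ := exists_eq_comp_shift_map_mor₂ Tr hTr (h₁ k hk) f
  rw [h₂ k hk f', zero_comp]

end Triangles

lemma span_range_map_succ_eq_top {R N N' : Type*} [Semiring R] [AddCommMonoid N] [Module R N]
    [AddCommMonoid N'] [Module R N'] (φ : N →ₗ[R] N') (hφ : Function.Surjective φ) {r : ℕ}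
    {v : Fin (r + 1) → N} (hv : Submodule.span R (Set.range v) = ⊤) (h₀ : φ (v 0) = 0) :
    Submodule.span R (Set.range fun i : Fin r => φ (v i.succ)) = ⊤ := by
  have : Submodule.span R (Set.range (φ ∘ v)) = ⊤ := by
    rw [Set.range_comp, ← Submodule.map_span, hv, Submodule.map_top, LinearMap.range_eq_top.mpr hφ]
  rwa [Fin.range_fin_succ, Function.comp_apply, h₀, Submodule.span_insert_zero] at this

section Aisle

variable {M : T} {R : Type*} [Semiring R] [Linear R T]

lemma exists_isLeftApprox_tleMn_of_span (hM : M ∈ tleMn M 0) {n : ℤ} {r : ℕ} {X : T}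
    (gen : Fin r → (M ⟶ X⟦n + 1⟧)) (hX : X ∈ tleMn M (n + 1))
    (hgen : Submodule.span R (Set.range gen) = ⊤) :
    ∃ (Y : T) (f : X ⟶ Y), Y ∈ tleMn M n ∧ IsLeftApprox (tleMn M n) f := by
  induction r generalizing X with
  | zero =>
    refine ⟨X, 𝟙 X, fun k hk f => ?_, IsLeftApprox.of_isIso _⟩
    rcases (show n + 1 ≤ k by omega).eq_or_lt with rfl | hk'
    · have hf : f ∈ Submodule.span R (Set.range gen) := hgen ▸ Submodule.mem_top
      simpa using hf
    · exact hX k hk' f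
  | succ r ih =>
    let u : M⟦-(n + 1)⟧ ⟶ X := (shiftHomEquiv M X (neg_add_cancel (n + 1))).symm (gen 0)
    have hu : shiftHomEquiv M X _ u = gen 0 := AddEquiv.apply_symm_apply _ _
    obtain ⟨Y, p, δ, hTr⟩ := distinguished_cocone_triangle u
    have hA : (M⟦-(n + 1)⟧)⟦(1 : ℤ)⟧ ∈ tleMn M n :=
      shift_mem_tleMn (shift_mem_tleMn hM (n := n + 1) (by omega)) (by omega)
    have hY : Y ∈ tleMn M (n + 1) := mem_tleMn_obj₃ _ hTr (tleMn_mono (by omega) hA) hX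
    let φ := Linear.rightComp R M (p⟦n + 1⟧')
    have hφ : Function.Surjective φ := fun f =>
      (exists_eq_comp_shift_map_mor₂ _ hTr (hA _ (by omega)) f).imp fun _ h => h.symm
    have hφ₀ : φ (gen 0) = 0 := by
      have hup : u ≫ p = 0 := comp_distTriang_mor_zero₁₂ _ hTr
      rw [Linear.rightComp_apply, ← hu, ← shiftHomEquiv_comp, hup, map_zero]
    obtain ⟨Z, q, hZ, hq⟩ := ih _ hY (span_range_map_succ_eq_top φ hφ hgen hφ₀)
    refine ⟨Z, p ≫ q, hZ, (IsLeftApprox.mor₂ _ hTr fun W hW (g : X ⟶ W) => ?_).comp hq⟩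
    change u ≫ g = 0
    apply (shiftHomEquiv M W (neg_add_cancel (n + 1))).injective
    rw [map_zero, shiftHomEquiv_comp]
    exact hW _ (by omega) _

lemma exists_isLeftApprox_tleMn_of_mem_tleMn_add_one (hM : M ∈ tleMn M 0) {n : ℤ} {X : T}
    [Module.Finite R (M ⟶ X⟦n + 1⟧)] (hX : X ∈ tleMn M (n + 1)) :
    ∃ (Y : T) (f : X ⟶ Y), Y ∈ tleMn M n ∧ IsLeftApprox (tleMn M n) f := by
  obtain ⟨r, gen, hgen⟩ := Module.Finite.exists_fin (R := R) (M := M ⟶ X⟦n + 1⟧)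
  exact exists_isLeftApprox_tleMn_of_span hM gen hX hgen

variable (R) in
lemma exists_isLeftApprox_tleMn_zero (hM : M ∈ tleMn M 0)
    (hfin : ∀ Z : T, Module.Finite R (M ⟶ Z)) {X : T} {n : ℤ} (hX : X ∈ tleMn M n) :
    ∃ (Y : T) (f : X ⟶ Y), Y ∈ tleMn M 0 ∧ IsLeftApprox (tleMn M 0) f := by
  suffices ∀ n : ℤ, 0 ≤ n → ∀ X ∈ tleMn M n,
      ∃ (Y : T) (f : X ⟶ Y), Y ∈ tleMn M 0 ∧ IsLeftApprox (tleMn M 0) f from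
    this _ (le_max_right n 0) X (tleMn_mono (le_max_left n 0) hX)
  intro n hn
  induction n, hn using Int.leInduction with
  | base => exact fun X hX => ⟨X, 𝟙 X, hX, .of_isIso _⟩
  | succ n hn ih =>
    intro X hX
    obtain ⟨Y, f, hY, hf⟩ := exists_isLeftApprox_tleMn_of_mem_tleMn_add_one (R := R) hM hX
    obtain ⟨Z, g, hZ, hg⟩ := ih Y hY
    exact ⟨Z, f ≫ g, hZ, (hf.mono (tleMn_mono hn)).comp hg⟩

end Aisle

lemma exists_isLeftApprox_heartM {M : T} (ht : IsTStr (tleMn M 0) (tgeMn M 0)) {X : T}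
    (hX : X ∈ tleMn M 0) :
    ∃ (H : T) (f : X ⟶ H), H ∈ heartM M ∧ IsLeftApprox (heartM M) f := by
  -- shifting `τ^{≤0}(X⟦-1⟧) ⟶ X⟦-1⟧ ⟶ τ^{≥1}(X⟦-1⟧)` gives `τ^{≤-1}X ⟶ X⟦-1⟧⟦1⟧ ⟶ τ^{≥0}X`
  obtain ⟨A, _, a, b, c, hTr, hA, G, hG, rfl⟩ := ht.exhaust (X⟦(-1 : ℤ)⟧)
  let Tr := (shiftFunctor (Triangle T) (1 : ℤ)).obj (Triangle.mk a b c)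
  have hTr₁ : Tr ∈ distTriang T := Triangle.shift_distinguished _ hTr 1
  have hA₁ : Tr.obj₁ ∈ tleMn M 0 := shift_mem_tleMn (j := 1) (n := 0) hA (by norm_num)
  refine ⟨Tr.obj₃, (shiftNegShift X 1).inv ≫ Tr.mor₂, ⟨?_, ?_⟩,
    (IsLeftApprox.of_isIso _).comp (IsLeftApprox.mor₂ Tr hTr₁ fun H hH g => ?_)⟩
  · have hX₁ : X⟦(-1 : ℤ)⟧ ∈ tleMn M 1 := shift_mem_tleMn hX (by norm_num)
    exact mem_tleMn_obj₃ Tr hTr₁ (shift_mem_tleMn (j := 1) hA₁ (by norm_num))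
      (shift_mem_tleMn (j := 1) hX₁ (by norm_num))
  · have hG₁ : G⟦(-1 : ℤ)⟧ ∈ tgeMn M 1 := shift_mem_tgeMn hG (by norm_num)
    exact shift_mem_tgeMn (j := 1) hG₁ (by norm_num)
  · exact (shiftHomEquiv A H (add_neg_cancel 1)).injective <|
      (ht.hom_zero A hA H hH.2 _).trans (map_zero _).symm

lemma IsSTTriple.finite_hom {R : Type*} [CommRing R] [Linear R T] {C D : Set T} {M : T}
    (hST : IsSTTriple R C D M) (Z : T) : Module.Finite R (M ⟶ Z) :=
  have := (isFiniteLength_iff_isNoetherian_isArtinian.mp (hST.finLength Z)).1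
  inferInstance

theorem stmt12_general {R : Type*} [CommRing R] [CategoryTheory.Linear R T]
    (C D : Set T) (M : T) (hST : IsSTTriple R C D M) :
    ∀ X : T, ∃ H, H ∈ heartM M ∧ ∃ f : X ⟶ H,
      ∀ H', H' ∈ heartM M → ∀ g : X ⟶ H', ∃ h : H ⟶ H', f ≫ h = g := by
  intro X
  obtain ⟨n, hX⟩ := hST.exhaustT X
  obtain ⟨Y, f, hY, hf⟩ := exists_isLeftApprox_tleMn_zero R hST.presilting hST.finite_hom hX
  obtain ⟨H, g, hH, hg⟩ := exists_isLeftApprox_heartM hST.tstr hY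
  exact ⟨H, hH, f ≫ g, (hf.mono Set.inter_subset_left).comp hg⟩

/-- for an ST-triple `(C, D, M)` inside `T`, the heart `T_M^0` is covariantly
finite in `T`: every object of `T` admits a left `T_M^0`-approximation. -/
theorem stmt12 {R : Type*} [CommRing R] [IsArtinianRing R] [CategoryTheory.Linear R T]
    [IsIdempotentComplete T]
    (C D : Set T) (M : T) (hST : IsSTTriple R C D M) :
    ∀ X : T, ∃ H, H ∈ heartM M ∧ ∃ f : X ⟶ H,
      ∀ H', H' ∈ heartM M → ∀ g : X ⟶ H', ∃ h : H ⟶ H', f ≫ h = g :=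
  stmt12_general C D M hST

end STPaper
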